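/- Let n ≥ 2, c ∈ ℝ, R > 0, let T ≥ 1, and let f : ℝⁿ → ℝ be indistinguishable (invariant under every permutation of its n arguments) and twice continuously differentiable on an open set containing the closed Euclidean ball B̄(c^⊗n, R). Let r̄(x) = f(x,…,x) be the diagonal restriction. Then there exists δ > 0 such that for every finite sequence of action profiles a_0, a_1, …, a_{T−1} ∈ B̄(c^⊗n, R), writing m̄_t = (1/n) Σ_{j=1}^n a_{j,t} for the mean of a_t, the accumulated payoff satisfies | Σ_{t=0}^{T−1} f(a_t) − Σ_{t=0}^{T−1} r̄(m̄_t) | ≤ δ · Σ_{t=0}^{T−1} ‖a_t − m̄_t^⊗n‖², where ‖·‖ denotes the Euclidean norm on ℝⁿ. -/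

import Mathlib

/-!
The gradient of a permutation-invariant function at a diagonal point `m^⊗n` is itself
permutation-invariant, hence a multiple of `(1,…,1)`, so it annihilates the deviation
`a - m̄^⊗n`, whose coordinates sum to zero. The first-order Taylor term at the mean profile
therefore vanishes, and the Lipschitz bound on the gradient over the compact convex ball
(which contains the mean profile of each of its points) bounds `|f a - r̄(m̄)|` by a constant
times `‖a - m̄^⊗n‖²`. Summing over `t` gives the dynamic bound.
-/

open Finset NNReal Metric

theorem Convex.norm_image_sub_sub_fderiv_le_of_lipschitzOnWith
    {E F : Type*} [NormedAddCommGroup E] [NormedSpace ℝ E] [NormedAddCommGroup F]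
    [NormedSpace ℝ F] {f : E → F} {s : Set E} {L : ℝ≥0} (hs : Convex ℝ s)
    (hf : ∀ x ∈ s, DifferentiableAt ℝ f x) (hL : LipschitzOnWith L (fderiv ℝ f) s)
    {x y : E} (hx : x ∈ s) (hy : y ∈ s) :
    ‖f y - f x - fderiv ℝ f x (y - x)‖ ≤ L * ‖y - x‖ ^ 2 := by
  have hseg : segment ℝ x y ⊆ s := hs.segment_subset hx hy
  have bound : ∀ z ∈ segment ℝ x y, ‖fderiv ℝ f z - fderiv ℝ f x‖ ≤ L * ‖y - x‖ :=
    fun z hz => calc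
      ‖fderiv ℝ f z - fderiv ℝ f x‖ ≤ L * ‖z - x‖ := hL.norm_sub_le (hseg hz) hx
      _ ≤ L * ‖y - x‖ := by gcongr; exact norm_sub_le_of_mem_segment hz
  calc ‖f y - f x - fderiv ℝ f x (y - x)‖ ≤ L * ‖y - x‖ * ‖y - x‖ :=
        (convex_segment x y).norm_image_sub_le_of_norm_hasFDerivWithin_le'
          (fun z hz => (hf z (hseg hz)).hasFDerivAt.hasFDerivWithinAt) bound
          (left_mem_segment ℝ x y) (right_mem_segment ℝ x y)
    _ = L * ‖y - x‖ ^ 2 := by ring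

theorem norm_sq_le_sum_sq {ι : Type*} [Fintype ι] (x : ι → ℝ) : ‖x‖ ^ 2 ≤ ∑ j, x j ^ 2 := by
  have hx : ‖x‖ ≤ √(∑ j, x j ^ 2) :=
    (pi_norm_le_iff_of_nonneg (Real.sqrt_nonneg _)).2 fun j =>
      Real.abs_le_sqrt (single_le_sum (fun i _ => sq_nonneg (x i)) (mem_univ j))
  calc ‖x‖ ^ 2 ≤ √(∑ j, x j ^ 2) ^ 2 := by gcongr
    _ = ∑ j, x j ^ 2 := Real.sq_sqrt (by positivity)

section EuclideanBall

variable {ι : Type*} [Fintype ι]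

theorem setOf_sum_sq_sub_le_eq_preimage_closedBall (p : ι → ℝ) (r : ℝ) :
    {a : ι → ℝ | ∑ j, (a j - p j) ^ 2 ≤ r ^ 2} =
      (EuclideanSpace.equiv ι ℝ).symm ⁻¹'
        closedBall ((EuclideanSpace.equiv ι ℝ).symm p) √(r ^ 2) := by
  ext a
  simp only [Set.mem_ofPred_eq, Set.mem_preimage, mem_closedBall, EuclideanSpace.dist_eq,
    Real.dist_eq, sq_abs]
  exact (Real.sqrt_le_sqrt_iff (sq_nonneg r)).symm

theorem isCompact_setOf_sum_sq_sub_le (p : ι → ℝ) (r : ℝ) :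
    IsCompact {a : ι → ℝ | ∑ j, (a j - p j) ^ 2 ≤ r ^ 2} := by
  rw [setOf_sum_sq_sub_le_eq_preimage_closedBall]
  exact (EuclideanSpace.equiv ι ℝ).symm.toHomeomorph.isCompact_preimage.2
    (isCompact_closedBall _ _)

theorem convex_setOf_sum_sq_sub_le (p : ι → ℝ) (r : ℝ) :
    Convex ℝ {a : ι → ℝ | ∑ j, (a j - p j) ^ 2 ≤ r ^ 2} := by
  rw [setOf_sum_sq_sub_le_eq_preimage_closedBall]
  exact (convex_closedBall _ _).linear_preimage
    (EuclideanSpace.equiv ι ℝ).symm.toLinearEquiv.toLinearMap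

end EuclideanBall

section SymmetricFunction

variable {ι : Type*} [Fintype ι]

theorem sum_sub_mean_eq_zero (a : ι → ℝ) : ∑ j, (a j - (∑ i, a i) / Fintype.card ι) = 0 := by
  rcases isEmpty_or_nonempty ι with _ | _
  · simp
  · rw [sum_sub_distrib, sum_const, card_univ, nsmul_eq_mul,
      mul_div_cancel₀ _ (Nat.cast_ne_zero.2 Fintype.card_ne_zero), sub_self]

theorem sum_sq_sub_eq_sum_sq_sub_mean_add (a : ι → ℝ) (c : ℝ) :
    ∑ j, (a j - c) ^ 2 = ∑ j, (a j - (∑ i, a i) / Fintype.card ι) ^ 2 +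
      Fintype.card ι * ((∑ i, a i) / Fintype.card ι - c) ^ 2 := by
  set m := (∑ i, a i) / Fintype.card ι
  have h := sum_sub_mean_eq_zero a
  calc ∑ j, (a j - c) ^ 2 = ∑ j, ((a j - m) ^ 2 + 2 * (m - c) * (a j - m) + (m - c) ^ 2) :=
        sum_congr rfl fun j _ => by ring
    _ = _ := by rw [sum_add_distrib, sum_add_distrib, ← mul_sum, h]; simp

theorem sum_sq_mean_sub_le (a : ι → ℝ) (c : ℝ) :
    ∑ _j : ι, ((∑ i, a i) / Fintype.card ι - c) ^ 2 ≤ ∑ j, (a j - c) ^ 2 := by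
  rw [sum_sq_sub_eq_sum_sq_sub_mean_add a c, sum_const, card_univ, nsmul_eq_mul]
  exact le_add_of_nonneg_left (by positivity)

variable {f : (ι → ℝ) → ℝ}

theorem fderiv_const_apply_comp_perm
    (hsym : ∀ (π : Equiv.Perm ι) (a : ι → ℝ), f (a ∘ π) = f a) (m : ℝ) (π : Equiv.Perm ι)
    (v : ι → ℝ) :
    fderiv ℝ f (fun _ => m) (v ∘ π) = fderiv ℝ f (fun _ => m) v := by
  set e := (LinearEquiv.funCongrLeft ℝ ℝ π).toContinuousLinearEquiv
  have hfe : f ∘ e = f := funext (hsym π)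
  have h := e.comp_right_fderiv (f := f) (x := fun _ => m)
  rw [hfe] at h
  exact (congrArg (· v) h).symm

theorem fderiv_const_apply_eq_zero_of_sum_eq_zero
    (hsym : ∀ (π : Equiv.Perm ι) (a : ι → ℝ), f (a ∘ π) = f a) (m : ℝ) {v : ι → ℝ}
    (hv : ∑ j, v j = 0) : fderiv ℝ f (fun _ => m) v = 0 := by
  classical
  rcases isEmpty_or_nonempty ι with _ | ⟨⟨j₀⟩⟩
  · rw [Subsingleton.elim v 0, map_zero]
  set D := fderiv ℝ f (fun _ => m)
  have hsingle : ∀ j t, D (Pi.single j t) = D (Pi.single j₀ t) := fun j t => by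
    rw [← fderiv_const_apply_comp_perm hsym m (Equiv.swap j j₀), Pi.single_comp_equiv,
      Equiv.symm_swap, Equiv.swap_apply_left]
  have hsum : (∑ j, Pi.single j₀ (v j) : ι → ℝ) = Pi.single j₀ (∑ j, v j) :=
    (map_sum (AddMonoidHom.single (fun _ => ℝ) j₀) v univ).symm
  calc D v = ∑ j, D (Pi.single j (v j)) := by rw [← map_sum, univ_sum_single]
    _ = D (Pi.single j₀ (∑ j, v j)) := by simp only [hsingle, ← map_sum, hsum]
    _ = 0 := by rw [hv, Pi.single_zero, map_zero]

theorem abs_sub_const_mean_le_mul_sum_sq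
    (hsym : ∀ (π : Equiv.Perm ι) (a : ι → ℝ), f (a ∘ π) = f a) {K : Set (ι → ℝ)} {L : ℝ≥0}
    (hK : Convex ℝ K) (hf : ∀ x ∈ K, DifferentiableAt ℝ f x)
    (hL : LipschitzOnWith L (fderiv ℝ f) K) {a : ι → ℝ} (ha : a ∈ K)
    (hmean : (fun _ => (∑ i, a i) / Fintype.card ι) ∈ K) :
    |f a - f (fun _ => (∑ i, a i) / Fintype.card ι)| ≤
      L * ∑ j, (a j - (∑ i, a i) / Fintype.card ι) ^ 2 := by
  set m := (∑ i, a i) / Fintype.card ι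
  have hD : fderiv ℝ f (fun _ => m) (a - fun _ => m) = 0 :=
    fderiv_const_apply_eq_zero_of_sum_eq_zero hsym m (sum_sub_mean_eq_zero a)
  calc |f a - f (fun _ => m)|
      = ‖f a - f (fun _ => m) - fderiv ℝ f (fun _ => m) (a - fun _ => m)‖ := by
        rw [hD, sub_zero, Real.norm_eq_abs]
    _ ≤ L * ‖a - fun _ => m‖ ^ 2 :=
        hK.norm_image_sub_sub_fderiv_le_of_lipschitzOnWith hf hL hmean ha
    _ ≤ L * ∑ j, (a j - m) ^ 2 := by gcongr; exact norm_sq_le_sum_sq _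

end SymmetricFunction

theorem stmt_7_general (n : ℕ) (c R : ℝ) (T : ℕ)
    (f : (Fin n → ℝ) → ℝ) (s : Set (Fin n → ℝ)) (hs : IsOpen s)
    (hball : {a : Fin n → ℝ | ∑ j, (a j - c) ^ 2 ≤ R ^ 2} ⊆ s)
    (hsym : ∀ (π : Equiv.Perm (Fin n)) (a : Fin n → ℝ), f (a ∘ π) = f a)
    (hf : ContDiffOn ℝ 2 f s) :
    ∃ δ > 0, ∀ a : Fin T → Fin n → ℝ,
      (∀ t : Fin T, ∑ j, (a t j - c) ^ 2 ≤ R ^ 2) →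
      |(∑ t, f (a t)) - ∑ t, f (fun _ => (∑ i, a t i) / n)| ≤
        δ * ∑ t, ∑ j, (a t j - (∑ i, a t i) / n) ^ 2 := by
  set K := {a : Fin n → ℝ | ∑ j, (a j - c) ^ 2 ≤ R ^ 2}
  have hK : Convex ℝ K := convex_setOf_sum_sq_sub_le (fun _ => c) R
  have hdiff : ∀ x ∈ K, DifferentiableAt ℝ f x := fun x hx =>
    (hf.contDiffAt (hs.mem_nhds (hball hx))).differentiableAt two_ne_zero
  obtain ⟨L, hL⟩ := ((hf.fderiv_of_isOpen hs le_rfl).mono hball).exists_lipschitzOnWith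
    one_ne_zero hK (isCompact_setOf_sum_sq_sub_le (fun _ => c) R)
  refine ⟨L + 1, by positivity, fun a ha => ?_⟩
  rw [← sum_sub_distrib, mul_sum]
  refine (abs_sum_le_sum_abs _ _).trans (sum_le_sum fun t _ => ?_)
  have hmean : (fun _ => (∑ i, a t i) / Fintype.card (Fin n)) ∈ K :=
    (sum_sq_mean_sub_le (a t) c).trans (ha t)
  have hstatic := abs_sub_const_mean_le_mul_sum_sq hsym hK hdiff hL (ha t) hmean
  rw [Fintype.card_fin] at hstatic
  exact hstatic.trans (by gcongr; linarith)

/-- Dynamic version of the nonasymptotic mean-field bound: for an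
indistinguishable `f : ℝⁿ → ℝ` which is C² on an open set containing the closed
Euclidean ball of radius `R` around `(c,…,c)`, there is `δ > 0` such that for
every horizon-`T` sequence of action profiles `a_0,…,a_{T−1}` in the ball,
`|Σ_t f(a_t) − Σ_t r̄(m̄_t)| ≤ δ · Σ_t ‖a_t − m̄_t^⊗n‖²` where `m̄_t` is the mean of
`a_t`. -/
theorem stmt_7 (n : ℕ) (hn : 2 ≤ n) (c R : ℝ) (hR : 0 < R) (T : ℕ) (hT : 1 ≤ T)
    (f : (Fin n → ℝ) → ℝ) (s : Set (Fin n → ℝ)) (hs : IsOpen s)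
    (hball : {a : Fin n → ℝ | ∑ j, (a j - c) ^ 2 ≤ R ^ 2} ⊆ s)
    (hsym : ∀ (π : Equiv.Perm (Fin n)) (a : Fin n → ℝ), f (a ∘ π) = f a)
    (hf : ContDiffOn ℝ 2 f s) :
    ∃ δ > 0, ∀ a : Fin T → Fin n → ℝ,
      (∀ t : Fin T, ∑ j, (a t j - c) ^ 2 ≤ R ^ 2) →
      |(∑ t, f (a t)) - ∑ t, f (fun _ => (∑ i, a t i) / n)| ≤
        δ * ∑ t, ∑ j, (a t j - (∑ i, a t i) / n) ^ 2 :=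
  stmt_7_general n c R T f s hs hball hsym hf
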